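/- On the jet space of surfaces z = z(x,y) in the contact space ℝ³ with the GL(2,ℝ)-invariants I₁' = (xz_x + yz_y − xy)/(2z − xy) (well-defined where 2z ≠ xy) and derivations ∇₁ = xD_x + yD_y, ∇₂ = (x − 2z_y)D_x + (2z_x − y)D_y, the identities I_{2a}' = ∇₁(I₁') + 2(I₁')² − I₁' and I_{2b}' = −½∇₁(I₁') − ½∇₂(I₁') − (I₁')² + I₁' hold, where I_{2a}' = (x²z_{xx} + 2xyz_{xy} + y²z_{yy} − xy)/(2z − xy) and I_{2b}' = (x(z_y − x)z_{xx} − yz_xz_{yy} + (y(z_y − x) − xz_x)z_{xy} + xz_x)/(2z − xy). -/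

import Mathlib

/-! The invariant `I₁'` is a quotient `N / Δ` of polynomials in the jet coordinates, so the
quotient rule gives `D_x I₁'` and `D_y I₁'` in closed form with denominator `Δ²`; after
clearing that denominator both identities are polynomial identities. -/

open Matrix

noncomputable section

/-- Coordinates on the 2-jet space of surfaces `z = z(x,y)`:
`(x, y, z, z_x, z_y, z_xx, z_xy, z_yy)`. -/
def Dx (F : (Fin 8 → ℝ) → ℝ) : (Fin 8 → ℝ) → ℝ := fun p =>
  fderiv ℝ F p ![1, 0, p 3, p 5, p 6, 0, 0, 0]

def Dy (F : (Fin 8 → ℝ) → ℝ) : (Fin 8 → ℝ) → ℝ := fun p =>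
  fderiv ℝ F p ![0, 1, p 4, p 6, p 7, 0, 0, 0]

/-- `∇₁ = x D_x + y D_y`. -/
def Nabla1 (F : (Fin 8 → ℝ) → ℝ) : (Fin 8 → ℝ) → ℝ := fun p =>
  p 0 * Dx F p + p 1 * Dy F p

/-- `∇₂ = (x − 2z_y) D_x + (2z_x − y) D_y`. -/
def Nabla2 (F : (Fin 8 → ℝ) → ℝ) : (Fin 8 → ℝ) → ℝ := fun p =>
  (p 0 - 2 * p 4) * Dx F p + (2 * p 3 - p 1) * Dy F p

/-- `I₁' = (x z_x + y z_y − xy)/(2z − xy)`. -/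
def I1' : (Fin 8 → ℝ) → ℝ := fun p =>
  (p 0 * p 3 + p 1 * p 4 - p 0 * p 1) / (2 * p 2 - p 0 * p 1)

/-- `I_{2a}' = (x²z_xx + 2xyz_xy + y²z_yy − xy)/(2z − xy)`. -/
def I2a' : (Fin 8 → ℝ) → ℝ := fun p =>
  ((p 0) ^ 2 * p 5 + 2 * p 0 * p 1 * p 6 + (p 1) ^ 2 * p 7 - p 0 * p 1) / (2 * p 2 - p 0 * p 1)

/-- `I_{2b}' = (x(z_y − x)z_xx − yz_xz_yy + (y(z_y − x) − xz_x)z_xy + xz_x)/(2z − xy)`. -/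
def I2b' : (Fin 8 → ℝ) → ℝ := fun p =>
  (p 0 * (p 4 - p 0) * p 5 - p 1 * p 3 * p 7 + (p 1 * (p 4 - p 0) - p 0 * p 3) * p 6
    + p 0 * p 3) / (2 * p 2 - p 0 * p 1)

theorem HasFDerivAt.div {𝕜 E : Type*} [NontriviallyNormedField 𝕜] [NormedAddCommGroup E]
    [NormedSpace 𝕜 E] {c d : E → 𝕜} {c' d' : E →L[𝕜] 𝕜} {x : E}
    (hc : HasFDerivAt c c' x) (hd : HasFDerivAt d d' x) (hx : d x ≠ 0) :
    HasFDerivAt (fun y => c y / d y) ((d x ^ 2)⁻¹ • (d x • c' - c x • d')) x := by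
  have hinv := (hasDerivAt_inv hx).comp_hasFDerivAt x hd
  rw [show (fun y => c y / d y) = c * ((·⁻¹) ∘ d) from funext fun y => div_eq_mul_inv _ _]
  refine (hc.mul hinv).congr_fderiv ?_
  ext v
  simp only [Function.comp_apply, _root_.add_apply, _root_.smul_apply, _root_.sub_apply,
    smul_eq_mul]
  field_simp
  ring

lemma fderiv_I1'_apply (p v : Fin 8 → ℝ) (h : 2 * p 2 - p 0 * p 1 ≠ 0) :
    fderiv ℝ I1' p v =
      ((v 0 * p 3 + p 0 * v 3 + v 1 * p 4 + p 1 * v 4 - (v 0 * p 1 + p 0 * v 1))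
          * (2 * p 2 - p 0 * p 1)
        - (p 0 * p 3 + p 1 * p 4 - p 0 * p 1) * (2 * v 2 - (v 0 * p 1 + p 0 * v 1)))
        / (2 * p 2 - p 0 * p 1) ^ 2 := by
  have hp (i : Fin 8) : HasFDerivAt (fun q : Fin 8 → ℝ => q i) (ContinuousLinearMap.proj i) p :=
    hasFDerivAt_apply (𝕜 := ℝ) i p
  have hN := (((hp 0).mul (hp 3)).add ((hp 1).mul (hp 4))).sub ((hp 0).mul (hp 1))
  have hΔ := ((hp 2).const_mul (2 : ℝ)).sub ((hp 0).mul (hp 1))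
  have hI : HasFDerivAt I1' _ p := hN.div hΔ h
  rw [hI.fderiv]
  simp only [Pi.sub_apply, Pi.add_apply, Pi.mul_apply, _root_.smul_apply, _root_.sub_apply,
    _root_.add_apply, ContinuousLinearMap.proj_apply, smul_eq_mul]
  ring

lemma Dx_I1' (p : Fin 8 → ℝ) (h : 2 * p 2 - p 0 * p 1 ≠ 0) :
    Dx I1' p = ((p 3 + p 0 * p 5 + p 1 * p 6 - p 1) * (2 * p 2 - p 0 * p 1)
      - (p 0 * p 3 + p 1 * p 4 - p 0 * p 1) * (2 * p 3 - p 1)) / (2 * p 2 - p 0 * p 1) ^ 2 := by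
  rw [Dx, fderiv_I1'_apply p _ h]
  simp only [cons_val_zero, cons_val_one, cons_val]
  ring

lemma Dy_I1' (p : Fin 8 → ℝ) (h : 2 * p 2 - p 0 * p 1 ≠ 0) :
    Dy I1' p = ((p 4 + p 0 * p 6 + p 1 * p 7 - p 0) * (2 * p 2 - p 0 * p 1)
      - (p 0 * p 3 + p 1 * p 4 - p 0 * p 1) * (2 * p 4 - p 0)) / (2 * p 2 - p 0 * p 1) ^ 2 := by
  rw [Dy, fderiv_I1'_apply p _ h]
  simp only [cons_val_zero, cons_val_one, cons_val]
  ring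

theorem stmt_19 : ∀ p : Fin 8 → ℝ, 2 * p 2 - p 0 * p 1 ≠ 0 →
    I2a' p = Nabla1 I1' p + 2 * (I1' p) ^ 2 - I1' p ∧
    I2b' p = -(1 / 2) * Nabla1 I1' p - (1 / 2) * Nabla2 I1' p - (I1' p) ^ 2 + I1' p := by
  intro p h
  rw [Nabla1, Nabla2, Dx_I1' p h, Dy_I1' p h, I2a', I2b', I1']
  constructor <;> field_simp <;> ring
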